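/- For all real x > 0, y ≥ 0, z > 0, setting w = y(z-1)²/(2x), the continuous extension of the Pochhammer symbol satisfies r̃(x,y,z) = x^z · e^w · Γ(z,w)/Γ(z) = x^z e^w − ( y^z ((z-1)²)^z / 2^z ) · Σ_{k=0}^{∞} y^k (z-1)^{2k} / ( 2^k x^k Γ(z+k+1) ), the series on the right being absolutely convergent. -/

import Mathlib

/-!
Write `P(z, w) = γ(z, w) / Γ(z)` for the regularized lower incomplete gamma function. Integration
by parts gives `P(z, w) - P(z + 1, w) = e^{-w} w^z / Γ(z + 1)`, so telescoping yields
`P(z, w) = e^{-w} ∑_{k<n} w^{z+k} / Γ(z + k + 1) + P(z + n, w)`. The tail `P(z + n, w)` is at most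
`w^{z+n} / Γ(z + n + 1)`, the general term of a convergent series, hence tends to `0`. Finally
`Γ(z, w) = Γ(z) (1 - P(z, w))` turns this series for `P` into the one for `r̃`.
-/

/-- The upper incomplete gamma function `Γ(z,x) = ∫_x^∞ t^{z-1} e^{-t} dt`. -/
noncomputable def upperGamma (z x : ℝ) : ℝ :=
  ∫ t in Set.Ioi x, t ^ (z - 1) * Real.exp (-t)

/-- The continuous extension of the Pochhammer analogue:
`r̃(x,y,z) = x^z e^w Γ(z,w)/Γ(z)` where `w = y(z-1)²/(2x)`. -/
noncomputable def rtildeExt (x y z : ℝ) : ℝ :=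
  x ^ z * Real.exp (y * (z - 1) ^ 2 / (2 * x)) *
    upperGamma z (y * (z - 1) ^ 2 / (2 * x)) / Real.Gamma z

open MeasureTheory Set Filter Topology Real

noncomputable def lowerGamma (z w : ℝ) : ℝ := ∫ t in (0 : ℝ)..w, exp (-t) * t ^ (z - 1)

noncomputable def regLowerGamma (z w : ℝ) : ℝ := lowerGamma z w / Gamma z

section LowerGamma

variable {z w : ℝ}

lemma ofReal_lowerGamma (hw : 0 ≤ w) : (lowerGamma z w : ℂ) = Complex.partialGamma z w := by
  rw [Complex.partialGamma, lowerGamma, ← intervalIntegral.integral_ofReal]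
  refine intervalIntegral.integral_congr fun t ht => ?_
  rw [uIcc_of_le hw] at ht
  simp only [Complex.ofReal_mul, Complex.ofReal_exp, Complex.ofReal_neg,
    Complex.ofReal_cpow ht.1, Complex.ofReal_sub, Complex.ofReal_one]

lemma lowerGamma_add_one (hz : 0 < z) (hw : 0 ≤ w) :
    lowerGamma (z + 1) w = z * lowerGamma z w - exp (-w) * w ^ z := by
  have h := Complex.partialGamma_add_one (s := z) (by simpa using hz) hw
  rw [← ofReal_lowerGamma hw, ← Complex.ofReal_one, ← Complex.ofReal_add,
    ← ofReal_lowerGamma hw, ← Complex.ofReal_cpow hw] at h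
  exact_mod_cast h

lemma lowerGamma_add_upperGamma (hz : 0 < z) (hw : 0 ≤ w) :
    lowerGamma z w + upperGamma z w = Gamma z := by
  have hI := GammaIntegral_convergent hz
  rw [Gamma_eq_integral hz, ← Ioc_union_Ioi_eq_Ioi hw,
    setIntegral_union (Ioc_disjoint_Ioi le_rfl) measurableSet_Ioi
      (hI.mono_set Ioc_subset_Ioi_self) (hI.mono_set (Ioi_subset_Ioi hw)),
    lowerGamma, intervalIntegral.integral_of_le hw, upperGamma]
  simp only [mul_comm (exp _)]

lemma lowerGamma_nonneg (hw : 0 ≤ w) : 0 ≤ lowerGamma z w :=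
  intervalIntegral.integral_nonneg hw fun t ht => by have := ht.1; positivity

lemma lowerGamma_le (hz : 0 < z) (hw : 0 ≤ w) : lowerGamma z w ≤ w ^ z / z := by
  have hpow : ∫ t in (0 : ℝ)..w, t ^ (z - 1) = w ^ z / z := by
    rw [integral_rpow (Or.inl (by linarith)), sub_add_cancel, zero_rpow hz.ne', sub_zero]
  rw [← hpow, lowerGamma]
  refine intervalIntegral.integral_mono_on hw ?_
    (intervalIntegral.intervalIntegrable_rpow' (by linarith)) fun t ht => ?_
  · rw [intervalIntegrable_iff_integrableOn_Ioc_of_le hw]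
    exact (GammaIntegral_convergent hz).mono_set Ioc_subset_Ioi_self
  · exact mul_le_of_le_one_left (rpow_nonneg ht.1 _) (exp_le_one_iff.mpr (by linarith [ht.1]))

lemma regLowerGamma_sub_regLowerGamma_add_one (hz : 0 < z) (hw : 0 ≤ w) :
    regLowerGamma z w - regLowerGamma (z + 1) w = exp (-w) * w ^ z / Gamma (z + 1) := by
  have hG := (Gamma_pos_of_pos hz).ne'
  rw [regLowerGamma, regLowerGamma, lowerGamma_add_one hz hw, Gamma_add_one hz.ne']
  field_simp
  ring

lemma regLowerGamma_nonneg (hz : 0 < z) (hw : 0 ≤ w) : 0 ≤ regLowerGamma z w :=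
  div_nonneg (lowerGamma_nonneg hw) (Gamma_pos_of_pos hz).le

lemma regLowerGamma_le (hz : 0 < z) (hw : 0 ≤ w) : regLowerGamma z w ≤ w ^ z / Gamma (z + 1) := by
  rw [regLowerGamma, Gamma_add_one hz.ne', div_le_iff₀ (Gamma_pos_of_pos hz)]
  calc lowerGamma z w ≤ w ^ z / z := lowerGamma_le hz hw
    _ = w ^ z / (z * Gamma z) * Gamma z := by field_simp [(Gamma_pos_of_pos hz).ne']

end LowerGamma

lemma summable_pow_div_Gamma {z : ℝ} (hz : -1 < z) (w : ℝ) :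
    Summable fun k : ℕ => w ^ k / Gamma (z + k + 1) := by
  refine summable_of_ratio_norm_eventually_le (r := 1 / 2) (by norm_num) ?_
  filter_upwards [eventually_ge_atTop ⌈2 * |w|⌉₊] with k hk
  have hk' : 2 * |w| ≤ k := Nat.ceil_le.mp hk
  have hzk : 0 < z + k + 1 := by linarith [abs_nonneg w]
  have hG := Gamma_pos_of_pos hzk
  have hratio : ‖w ^ (k + 1) / Gamma (z + (k + 1 : ℕ) + 1)‖ =
      |w| / (z + k + 1) * ‖w ^ k / Gamma (z + k + 1)‖ := by
    rw [Nat.cast_succ, ← add_assoc, Gamma_add_one hzk.ne', pow_succ, norm_div, norm_div, norm_mul,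
      norm_mul, norm_pow, norm_of_nonneg hG.le, norm_of_nonneg hzk.le, Real.norm_eq_abs]
    field_simp
  rw [hratio]
  refine mul_le_mul_of_nonneg_right ?_ (norm_nonneg _)
  rw [div_le_iff₀ hzk]
  linarith

lemma hasSum_regLowerGamma {z w : ℝ} (hz : 0 < z) (hw : 0 ≤ w) :
    HasSum (fun k : ℕ => exp (-w) * w ^ z * (w ^ k / Gamma (z + k + 1))) (regLowerGamma z w) := by
  have hterm (k : ℕ) : exp (-w) * w ^ z * (w ^ k / Gamma (z + k + 1)) =
      regLowerGamma (z + k) w - regLowerGamma (z + (k + 1 : ℕ)) w := by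
    rw [Nat.cast_succ, ← add_assoc, regLowerGamma_sub_regLowerGamma_add_one (by positivity) hw,
      rpow_add_natCast' hw (by positivity)]
    ring
  have htail : Tendsto (fun n : ℕ => regLowerGamma (z + n) w) atTop (𝓝 0) := by
    refine squeeze_zero (fun n => regLowerGamma_nonneg (by positivity) hw)
      (fun n => regLowerGamma_le (by positivity) hw) ?_
    simp_rw [rpow_add_natCast' hw (by positivity : z + _ ≠ 0), mul_div_assoc]
    simpa using ((summable_pow_div_Gamma (by linarith) w).tendsto_atTop_zero).const_mul (w ^ z)
  refine (hasSum_iff_tendsto_nat_of_nonneg (fun k => ?_) _).2 ?_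
  · have := Gamma_pos_of_pos (by positivity : 0 < z + k + 1)
    positivity
  simp_rw [hterm, Finset.sum_range_sub', Nat.cast_zero, add_zero]
  simpa using tendsto_const_nhds.sub htail

/-- For `x > 0`, `y ≥ 0`, `z > 0`, with `w = y(z-1)²/(2x)`:
`r̃(x,y,z) = x^z e^w − (y^z ((z-1)²)^z / 2^z) Σ_{k=0}^{∞} y^k (z-1)^{2k}/(2^k x^k Γ(z+k+1))`,
the series being absolutely convergent. -/
theorem rtildeExt_eq_series (x y z : ℝ) (hx : 0 < x) (hy : 0 ≤ y) (hz : 0 < z) :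
    (Summable fun k : ℕ =>
      |y ^ k * (z - 1) ^ (2 * k) / (2 ^ k * x ^ k * Real.Gamma (z + k + 1))|) ∧
    rtildeExt x y z =
      x ^ z * Real.exp (y * (z - 1) ^ 2 / (2 * x)) -
        (y ^ z * ((z - 1) ^ 2) ^ z / (2 : ℝ) ^ z) *
          ∑' k : ℕ, y ^ k * (z - 1) ^ (2 * k) / (2 ^ k * x ^ k * Real.Gamma (z + k + 1)) := by
  set w := y * (z - 1) ^ 2 / (2 * x) with hw_def
  have hw : 0 ≤ w := by positivity
  have hterm (k : ℕ) : y ^ k * (z - 1) ^ (2 * k) / (2 ^ k * x ^ k * Gamma (z + k + 1)) =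
      w ^ k / Gamma (z + k + 1) := by
    rw [div_pow, mul_pow, mul_pow, pow_mul, div_div]
  simp only [hterm]
  refine ⟨(summable_pow_div_Gamma (by linarith) w).abs, ?_⟩
  have hP := (hasSum_regLowerGamma hz hw).tsum_eq
  rw [tsum_mul_left] at hP
  have hxw : x ^ z * w ^ z = y ^ z * ((z - 1) ^ 2) ^ z / 2 ^ z := by
    have hxw' : x * w = y * (z - 1) ^ 2 / 2 := by rw [hw_def]; field_simp
    rw [← mul_rpow hx.le hw, hxw', div_rpow (by positivity) zero_le_two, mul_rpow hy (sq_nonneg _)]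
  calc rtildeExt x y z = x ^ z * exp w * (1 - regLowerGamma z w) := by
        rw [rtildeExt, ← hw_def, regLowerGamma, one_sub_div (Gamma_pos_of_pos hz).ne',
          ← lowerGamma_add_upperGamma hz hw, add_sub_cancel_left, mul_div_assoc]
    _ = x ^ z * exp w - x ^ z * w ^ z * ∑' k : ℕ, w ^ k / Gamma (z + k + 1) := by
        rw [← hP, mul_sub, mul_one, exp_neg]
        field_simp
    _ = _ := by rw [hxw]
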